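/- For any x, y ∈ ℝ^n and any p, q ≥ 1, the mean-normalized norm of the Hadamard product satisfies ‖x ⊙ y‖_{(p,mean)} ≤ n^{max(0, 2/q − 1/p)} ‖x‖_{(q,mean)} ‖y‖_{(q,mean)}. -/

import Mathlib

open Finset Real

-- power mean monotonicity (mean-normalized), a ≤ b
private lemma mean_mono {n : ℕ} (hn : 0 < n) (f : Fin n → ℝ) (hf : ∀ i, 0 ≤ f i)
    {a b : ℝ} (ha : 0 < a) (hab : a ≤ b) :
    ((1/(n:ℝ)) * ∑ i, f i ^ a) ^ (1/a) ≤ ((1/(n:ℝ)) * ∑ i, f i ^ b) ^ (1/b) := by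
  have hb : 0 < b := lt_of_lt_of_le ha hab
  have hn' : (0:ℝ) < n := by exact_mod_cast hn
  have hw : ∑ _i : Fin n, (1/(n:ℝ)) = 1 := by
    simp [Finset.sum_const, Finset.card_univ]
    field_simp
  have key := Real.rpow_arith_mean_le_arith_mean_rpow Finset.univ
    (fun _ : Fin n => (1/(n:ℝ))) (fun i => f i ^ a)
    (fun i _ => by positivity) hw (fun i _ => Real.rpow_nonneg (hf i) a)
    (p := b/a) ((one_le_div ha).mpr hab)
  have hz : ∀ i, (f i ^ a) ^ (b/a) = f i ^ b := by
    intro i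
    rw [← Real.rpow_mul (hf i), mul_div_cancel₀ _ (ne_of_gt ha)]
  simp_rw [hz] at key
  rw [← Finset.mul_sum, ← Finset.mul_sum] at key
  have hS : 0 ≤ (1/(n:ℝ)) * ∑ i, f i ^ a := by
    have h0 : 0 ≤ ∑ i, f i ^ a := Finset.sum_nonneg fun i _ => Real.rpow_nonneg (hf i) a
    positivity
  have h1 : ((1/(n:ℝ)) * ∑ i, f i ^ a) ^ (1/a)
      = (((1/(n:ℝ)) * ∑ i, f i ^ a) ^ (b/a)) ^ (1/b) := by
    rw [← Real.rpow_mul hS]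
    congr 1
    field_simp
  rw [h1]
  exact Real.rpow_le_rpow (Real.rpow_nonneg hS _) key (by positivity)

-- sum of rpow, r ≥ 1 : ∑ g^r ≤ (∑ g)^r
private lemma sum_rpow_le {n : ℕ} (g : Fin n → ℝ) (hg : ∀ i, 0 ≤ g i)
    {r : ℝ} (hr : 1 ≤ r) : ∑ i, g i ^ r ≤ (∑ i, g i) ^ r := by
  have hS : 0 ≤ ∑ i, g i := Finset.sum_nonneg fun i _ => hg i
  rcases eq_or_lt_of_le hS with h0 | hpos
  · have : ∀ i ∈ Finset.univ, g i = 0 := by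
      intro i _
      exact le_antisymm (by
        have := Finset.single_le_sum (fun j _ => hg j) (Finset.mem_univ i)
        linarith [h0]) (hg i)
    rcases Nat.eq_zero_or_pos n with hn | hn
    · subst hn; simp [Real.rpow_natCast]
      positivity
    · calc ∑ i, g i ^ r = 0 := by
            apply Finset.sum_eq_zero
            intro i hi
            rw [this i hi, Real.zero_rpow (by linarith)]
        _ ≤ (∑ i, g i) ^ r := by positivity
  · calc ∑ i, g i ^ r = ∑ i, g i * g i ^ (r - 1) := by
          apply Finset.sum_congr rfl
          intro i _
          rw [← Real.rpow_one_add' (hg i) (by linarith)]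
          ring_nf
      _ ≤ ∑ i, g i * (∑ j, g j) ^ (r - 1) := by
          apply Finset.sum_le_sum
          intro i _
          exact mul_le_mul_of_nonneg_left
            (Real.rpow_le_rpow (hg i)
              (Finset.single_le_sum (fun j _ => hg j) (Finset.mem_univ i)) (by linarith))
            (hg i)
      _ = (∑ i, g i) ^ r := by
          rw [← Finset.sum_mul, ← Real.rpow_one_add' (le_of_lt hpos) (by linarith)]
          ring_nf

-- Cauchy-Schwarz step
private lemma cs_step {n : ℕ} (x y : Fin n → ℝ) {q : ℝ} (hq : 0 < q) :
    ∑ i, |x i * y i| ^ (q/2) ≤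
      (∑ i, |x i| ^ q) ^ (1/2 : ℝ) * (∑ i, |y i| ^ q) ^ (1/2 : ℝ) := by
  have h1 : ∀ i, |x i * y i| ^ (q/2) = |x i| ^ (q/2) * |y i| ^ (q/2) := by
    intro i
    rw [abs_mul, Real.mul_rpow (abs_nonneg _) (abs_nonneg _)]
  have h2 : ∀ (z : Fin n → ℝ) i, (|z i| ^ (q/2)) ^ 2 = |z i| ^ q := by
    intro z i
    rw [← Real.rpow_natCast (|z i| ^ (q/2)) 2, ← Real.rpow_mul (abs_nonneg _)]
    norm_num
  have cs := Finset.sum_mul_sq_le_sq_mul_sq Finset.univ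
    (fun i => |x i| ^ (q/2)) (fun i => |y i| ^ (q/2))
  simp_rw [h2] at cs
  simp_rw [h1]
  have hT : 0 ≤ ∑ i, |x i| ^ (q/2) * |y i| ^ (q/2) :=
    Finset.sum_nonneg fun i _ => by positivity
  have := Real.rpow_le_rpow (by positivity) cs (le_of_lt one_half_pos)
  rw [← Real.rpow_natCast (∑ i, |x i| ^ (q/2) * |y i| ^ (q/2)) 2,
    ← Real.rpow_mul hT] at this
  norm_num at this
  rwa [Real.mul_rpow (by positivity) (by positivity)] at this

/-- Hadamard-product bound in mean-normalized norms:
`‖x ⊙ y‖_{(p,mean)} ≤ n^{max(0, 2/q - 1/p)} ‖x‖_{(q,mean)} ‖y‖_{(q,mean)}`. -/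
theorem stmt_6 (n : ℕ) (x y : Fin n → ℝ) (p q : ℝ) (hp : 1 ≤ p) (hq : 1 ≤ q) :
    ((1/(n:ℝ)) * ∑ i, |x i * y i| ^ p) ^ (1/p) ≤
      (n:ℝ) ^ (max 0 (2/q - 1/p)) *
        (((1/(n:ℝ)) * ∑ i, |x i| ^ q) ^ (1/q)) *
        (((1/(n:ℝ)) * ∑ i, |y i| ^ q) ^ (1/q)) := by
  have hp0 : (0:ℝ) < p := lt_of_lt_of_le one_pos hp
  have hq0 : (0:ℝ) < q := lt_of_lt_of_le one_pos hq
  rcases Nat.eq_zero_or_pos n with hn | hn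
  · subst hn
    simp only [Finset.univ_eq_empty, Finset.sum_empty, mul_zero]
    rw [Real.zero_rpow (by positivity : (1/p) ≠ 0),
        Real.zero_rpow (by positivity : (1/q) ≠ 0)]
    simp
  have hn' : (0:ℝ) < n := by exact_mod_cast hn
  have hs : (0:ℝ) < q/2 := by linarith
  set A := ∑ i, |x i| ^ q with hA
  set B := ∑ i, |y i| ^ q with hB
  have hA0 : 0 ≤ A := Finset.sum_nonneg fun i _ => Real.rpow_nonneg (abs_nonneg _) q
  have hB0 : 0 ≤ B := Finset.sum_nonneg fun i _ => Real.rpow_nonneg (abs_nonneg _) q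
  have hcs := cs_step x y hq0
  set T := ∑ i, |x i * y i| ^ (q/2) with hT
  have hT0 : 0 ≤ T := Finset.sum_nonneg fun i _ => Real.rpow_nonneg (abs_nonneg _) _
  have h2q : 1/(q/2) = 2/q := one_div_div q 2
  have hE : ((1/(n:ℝ)) * (A ^ (1/2:ℝ) * B ^ (1/2:ℝ))) ^ (2/q)
      = ((1/(n:ℝ)) * A) ^ (1/q) * ((1/(n:ℝ)) * B) ^ (1/q) := by
    rw [Real.mul_rpow (by positivity) (by positivity),
        Real.mul_rpow (Real.rpow_nonneg hA0 _) (Real.rpow_nonneg hB0 _),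
        Real.mul_rpow (by positivity) hA0, Real.mul_rpow (by positivity) hB0,
        ← Real.rpow_mul hA0, ← Real.rpow_mul hB0]
    have hm : (1/2) * (2/q) = 1/q := by field_simp
    rw [hm]
    have hnn : ((1:ℝ)/n) ^ (2/q) = ((1:ℝ)/n) ^ (1/q) * ((1:ℝ)/n) ^ (1/q) := by
      rw [← Real.rpow_add (by positivity)]
      congr 1
      ring
    rw [hnn]
    ring
  rcases le_or_gt p (q/2) with hple | hplt
  · -- width-independent case
    have hmax : max 0 (2/q - 1/p) = 0 :=
      max_eq_left (sub_nonpos.mpr ((div_le_div_iff₀ hq0 hp0).mpr (by linarith)))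
    rw [hmax, Real.rpow_zero, one_mul]
    calc ((1/(n:ℝ)) * ∑ i, |x i * y i| ^ p) ^ (1/p)
        ≤ ((1/(n:ℝ)) * T) ^ (1/(q/2)) :=
          mean_mono hn (fun i => |x i * y i|) (fun i => abs_nonneg _) hp0 hple
      _ ≤ ((1/(n:ℝ)) * (A ^ (1/2:ℝ) * B ^ (1/2:ℝ))) ^ (1/(q/2)) := by
          apply Real.rpow_le_rpow (by positivity)
            (mul_le_mul_of_nonneg_left hcs (by positivity)) (by positivity)
      _ = ((1/(n:ℝ)) * A) ^ (1/q) * ((1/(n:ℝ)) * B) ^ (1/q) := by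
          rw [h2q, hE]
  · -- dimension-dependent case
    have hmax : max 0 (2/q - 1/p) = 2/q - 1/p :=
      max_eq_right (le_of_lt (sub_pos.mpr ((div_lt_div_iff₀ hp0 hq0).mpr (by linarith))))
    set S := ∑ i, |x i * y i| ^ p with hS
    have hS0 : 0 ≤ S := Finset.sum_nonneg fun i _ => Real.rpow_nonneg (abs_nonneg _) _
    have hr : (1:ℝ) ≤ p/(q/2) := (one_le_div hs).mpr (le_of_lt hplt)
    have h1 : S ≤ T ^ (p/(q/2)) := by
      have key := sum_rpow_le (fun i => |x i * y i| ^ (q/2))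
        (fun i => Real.rpow_nonneg (abs_nonneg _) _) hr
      have hz : ∀ i : Fin n, (|x i * y i| ^ (q/2)) ^ (p/(q/2)) = |x i * y i| ^ p := by
        intro i
        rw [← Real.rpow_mul (abs_nonneg _), mul_div_cancel₀ _ (ne_of_gt hs)]
      simp_rw [hz] at key
      exact key
    have h2 : S ^ (1/p) ≤ T ^ (2/q) := by
      have := Real.rpow_le_rpow hS0 h1 (le_of_lt (by positivity : (0:ℝ) < 1/p))
      rw [← Real.rpow_mul hT0] at this
      have hm : (p/(q/2)) * (1/p) = 2/q := by
        field_simp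
      rwa [hm] at this
    have h3 : T ^ (2/q) ≤ A ^ (1/q) * B ^ (1/q) := by
      calc T ^ (2/q) ≤ (A ^ (1/2:ℝ) * B ^ (1/2:ℝ)) ^ (2/q) :=
            Real.rpow_le_rpow hT0 hcs (by positivity)
        _ = A ^ (1/q) * B ^ (1/q) := by
            rw [Real.mul_rpow (Real.rpow_nonneg hA0 _) (Real.rpow_nonneg hB0 _),
              ← Real.rpow_mul hA0, ← Real.rpow_mul hB0]
            congr 2 <;> field_simp
    have hfac : ((1:ℝ)/n) ^ (1/p) = (n:ℝ) ^ (2/q - 1/p) * ((1:ℝ)/n) ^ (2/q) := by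
      rw [one_div, Real.inv_rpow hn'.le, Real.inv_rpow hn'.le,
          ← Real.rpow_neg hn'.le, ← Real.rpow_neg hn'.le, ← Real.rpow_add hn']
      congr 1
      ring
    rw [hmax]
    calc ((1/(n:ℝ)) * S) ^ (1/p)
        = ((1:ℝ)/n) ^ (1/p) * S ^ (1/p) := Real.mul_rpow (by positivity) hS0
      _ ≤ ((1:ℝ)/n) ^ (1/p) * (A ^ (1/q) * B ^ (1/q)) :=
          mul_le_mul_of_nonneg_left (le_trans h2 h3) (by positivity)
      _ = (n:ℝ) ^ (2/q - 1/p) * (((1:ℝ)/n) ^ (1/q) * A ^ (1/q)) *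
            (((1:ℝ)/n) ^ (1/q) * B ^ (1/q)) := by
          rw [hfac]
          have hnn : ((1:ℝ)/n) ^ (2/q) = ((1:ℝ)/n) ^ (1/q) * ((1:ℝ)/n) ^ (1/q) := by
            rw [← Real.rpow_add (by positivity)]
            congr 1
            ring
          rw [hnn]
          ring
      _ = (n:ℝ) ^ (2/q - 1/p) * ((1/(n:ℝ)) * A) ^ (1/q) * ((1/(n:ℝ)) * B) ^ (1/q) := by
          rw [Real.mul_rpow (by positivity) hA0, Real.mul_rpow (by positivity) hB0]
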